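/- (Gessel–Lv–Xin–Zhou) Let a_1, ..., a_n be fixed nonnegative integers and L(x_1,...,x_n) a Laurent polynomial over ℚ. Then the function f(a_0) = constant term of ∏_{l=1}^n (1 − x_l/x_0)^{a_0}(1 − x_0/x_l)^{a_l} · L(x_1,...,x_n) is a polynomial in a_0 of degree at most a_1 + ... + a_n, and the coefficient of a_0^{a_1+...+a_n} in this polynomial equals 1/(a_1+...+a_n)! times the constant term of (x_1 + ... + x_n)^{a_1+...+a_n} · ∏_{l=1}^n x_l^{−a_l} · L(x_1,...,x_n). -/

import Mathlib

/-!
Expanding `∏ₗ (1 - xₗ/x₀)^a₀` by the binomial theorem writes `f(a₀)` as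
`∑ⱼ (∏ₗ C(a₀, jₗ)) cⱼ`, where `cⱼ` is the constant term of `x^j x₀^(-|j|) ∏ₗ (1 - x₀/xₗ)^aₗ L`.
As `L` does not involve `x₀` and the product has `x₀`-degrees in `[0, A]`, `A = ∑ aₗ`, the
coefficient `cⱼ` vanishes for `|j| > A`; so `f` is a combination of the polynomials
`a₀ ↦ ∏ₗ C(a₀, jₗ)` of degree `|j| ≤ A`. In degree `A` only the top term `(-x₀)^A x^(-a)` of the
product contributes, and the multinomial theorem identifies the resulting sum
`∑_{|j| = A} CT(x^(j - a) L) / ∏ₗ jₗ!` with `CT((x₁ + ⋯ + xₙ)^A x^(-a) L) / A!`.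
-/

open Finset

/-- Multivariate Laurent monomial `x^v` in the group algebra `ℚ[ℤ^N]`. -/
noncomputable def laurentMonomial {N : ℕ} (v : Fin N → ℤ) :
    AddMonoidAlgebra ℚ (Fin N →₀ ℤ) :=
  AddMonoidAlgebra.single (Finsupp.equivFunOnFinite.symm v) 1

/-- The constant term of a Laurent polynomial in `N` variables. -/
noncomputable def constantTerm {N : ℕ} (f : AddMonoidAlgebra ℚ (Fin N →₀ ℤ)) : ℚ :=
  (AddMonoidAlgebra.coeff f : (Fin N →₀ ℤ) →₀ ℚ) 0

open scoped Nat

section BinomialSums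

open Polynomial

variable {ι : Type*} [Fintype ι]

theorem eval_prod_descPochhammer (j : ι → ℕ) (m : ℕ) :
    (∏ l, descPochhammer ℚ (j l)).eval (m : ℚ) =
      (∏ l, ((j l)! : ℚ)) * ∏ l, (m.choose (j l) : ℚ) := by
  simp [eval_prod, descPochhammer_eval_eq_descFactorial, Nat.descFactorial_eq_factorial_mul_choose,
    prod_mul_distrib]

theorem monic_prod_descPochhammer (j : ι → ℕ) : (∏ l, descPochhammer ℚ (j l)).Monic :=
  monic_prod_of_monic _ _ fun l _ ↦ monic_descPochhammer ℚ (j l)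

theorem natDegree_prod_descPochhammer (j : ι → ℕ) :
    (∏ l, descPochhammer ℚ (j l)).natDegree = ∑ l, j l := by
  simp [natDegree_prod_of_monic _ _ fun l _ ↦ monic_descPochhammer ℚ (j l)]

theorem inv_prod_factorial_eq_multinomial_div (j : ι → ℕ) :
    (∏ l, ((j l)! : ℚ))⁻¹ = Nat.multinomial univ j / (∑ l, j l)! := by
  have : (Nat.multinomial univ j : ℚ) ≠ 0 := Nat.cast_ne_zero.2 (Nat.multinomial_pos _ _).ne'
  rw [← Nat.multinomial_spec univ j, Nat.cast_mul, Nat.cast_prod]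
  field_simp

variable [DecidableEq ι]

theorem le_of_mem_piFinset_range {i a : ι → ℕ}
    (hi : i ∈ Fintype.piFinset fun l ↦ range (a l + 1)) : i ≤ a :=
  fun l ↦ Nat.lt_succ_iff.1 (mem_range.1 (Fintype.mem_piFinset.1 hi l))

theorem sum_piFinset_range_eq_of_le {M : Type*} [AddCommMonoid M] {g : (ι → ℕ) → M} {b c : ℕ}
    (hbc : b ≤ c) (hg : ∀ j l, b < j l → g j = 0) :
    ∑ j ∈ Fintype.piFinset fun _ ↦ range (b + 1), g j =
      ∑ j ∈ Fintype.piFinset fun _ ↦ range (c + 1), g j := by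
  refine sum_subset (Fintype.piFinset_subset _ _ fun _ ↦ range_subset_range.2 (by omega))
    fun j _ hj ↦ ?_
  obtain ⟨l, hl⟩ : ∃ l, b < j l := by simpa [Fintype.mem_piFinset, Nat.lt_succ_iff] using hj
  exact hg j l hl

theorem sum_piFinset_range_eq {M : Type*} [AddCommMonoid M] {g : (ι → ℕ) → M} {b c : ℕ}
    (hb : ∀ j l, b < j l → g j = 0) (hc : ∀ j l, c < j l → g j = 0) :
    ∑ j ∈ Fintype.piFinset fun _ ↦ range (b + 1), g j =
      ∑ j ∈ Fintype.piFinset fun _ ↦ range (c + 1), g j := by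
  rw [sum_piFinset_range_eq_of_le (Nat.le_add_right b c) hb,
    sum_piFinset_range_eq_of_le (Nat.le_add_left c b) hc]

theorem piAntidiag_univ_subset_piFinset_range (A : ℕ) :
    univ.piAntidiag A ⊆ Fintype.piFinset fun _ : ι ↦ range (A + 1) := by
  intro j hj
  rw [mem_piAntidiag] at hj
  exact Fintype.mem_piFinset.2 fun l ↦
    mem_range_succ_iff.2 (hj.1 ▸ single_le_sum (by simp) (mem_univ l))

theorem exists_polynomial_eval_eq_sum_prod_choose (A : ℕ) (d : (ι → ℕ) → ℚ)
    (hd : ∀ j, A < ∑ l, j l → d j = 0) :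
    ∃ q : ℚ[X], q.degree ≤ A ∧
      (∀ m : ℕ, q.eval (m : ℚ) =
        ∑ j ∈ Fintype.piFinset fun _ ↦ range (m + 1), (∏ l, (m.choose (j l) : ℚ)) * d j) ∧
      q.coeff A = ∑ j ∈ univ.piAntidiag A, d j / ∏ l, ((j l)! : ℚ) := by
  have hfact (j : ι → ℕ) : (∏ l, ((j l)! : ℚ)) ≠ 0 :=
    prod_ne_zero_iff.2 fun l _ ↦ Nat.cast_ne_zero.2 (Nat.factorial_ne_zero _)
  have hd_of_coord (j : ι → ℕ) (l : ι) (hl : A < j l) : d j = 0 :=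
    hd j (hl.trans_le (single_le_sum (by simp) (mem_univ l)))
  refine ⟨∑ j ∈ Fintype.piFinset fun _ ↦ range (A + 1),
    (d j / ∏ l, ((j l)! : ℚ)) • ∏ l, descPochhammer ℚ (j l), ?_, fun m ↦ ?_, ?_⟩
  · refine (degree_sum_le _ _).trans (Finset.sup_le fun j _ ↦ ?_)
    rcases eq_or_ne (d j) 0 with hj | hj
    · simp [hj]
    refine (degree_smul_le _ _).trans (degree_le_natDegree.trans ?_)
    rw [natDegree_prod_descPochhammer]
    exact_mod_cast not_lt.1 (mt (hd j) hj)
  · rw [sum_piFinset_range_eq (g := fun j ↦ (∏ l, (m.choose (j l) : ℚ)) * d j) (c := A)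
      (fun j l hl ↦ by rw [prod_eq_zero (mem_univ l) (by simp [Nat.choose_eq_zero_of_lt hl]),
        zero_mul]) (fun j l hl ↦ by rw [hd_of_coord j l hl, mul_zero])]
    simp only [eval_finsetSum, eval_smul, eval_prod_descPochhammer, smul_eq_mul]
    refine sum_congr rfl fun j _ ↦ ?_
    field_simp [hfact j]
  · simp only [finsetSum_coeff, coeff_smul, smul_eq_mul]
    refine (sum_subset (piAntidiag_univ_subset_piFinset_range A) fun j _ hj ↦ ?_).symm.trans
      (sum_congr rfl fun j hj ↦ ?_)
    · rw [mem_piAntidiag] at hj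
      simp only [mem_univ, implies_true, and_true] at hj
      rcases lt_or_gt_of_ne hj with hlt | hgt
      · rw [coeff_eq_zero_of_natDegree_lt (by rwa [natDegree_prod_descPochhammer]), mul_zero]
      · rw [hd j hgt, zero_div, zero_mul]
    · rw [← (mem_piAntidiag.1 hj).1, ← natDegree_prod_descPochhammer,
        (monic_prod_descPochhammer j).coeff_natDegree, mul_one]

end BinomialSums

section LaurentMonomial

variable {N : ℕ}

noncomputable def laurentMonomialHom :
    Multiplicative (Fin N → ℤ) →* AddMonoidAlgebra ℚ (Fin N →₀ ℤ) :=
  (AddMonoidAlgebra.of ℚ _).comp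
    (AddEquiv.toMultiplicative Finsupp.addEquivFunOnFinite.symm).toMonoidHom

theorem laurentMonomialHom_ofAdd (v : Fin N → ℤ) :
    laurentMonomialHom (Multiplicative.ofAdd v) = laurentMonomial v := rfl

theorem laurentMonomial_add (v w : Fin N → ℤ) :
    laurentMonomial (v + w) = laurentMonomial v * laurentMonomial w := by
  simp only [← laurentMonomialHom_ofAdd, ofAdd_add, map_mul]

theorem laurentMonomial_nsmul (k : ℕ) (v : Fin N → ℤ) :
    laurentMonomial (k • v) = laurentMonomial v ^ k := by
  simp only [← laurentMonomialHom_ofAdd, ofAdd_nsmul, map_pow]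

theorem laurentMonomial_sum {ι : Type*} (s : Finset ι) (v : ι → Fin N → ℤ) :
    laurentMonomial (∑ i ∈ s, v i) = ∏ i ∈ s, laurentMonomial (v i) := by
  simp only [← laurentMonomialHom_ofAdd, ofAdd_sum, map_prod]

theorem constantTerm_sum {ι : Type*} (s : Finset ι) (f : ι → AddMonoidAlgebra ℚ (Fin N →₀ ℤ)) :
    constantTerm (∑ i ∈ s, f i) = ∑ i ∈ s, constantTerm (f i) := by
  simp [constantTerm]

theorem constantTerm_smul (c : ℚ) (f : AddMonoidAlgebra ℚ (Fin N →₀ ℤ)) :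
    constantTerm (c • f) = c * constantTerm f := rfl

theorem constantTerm_laurentMonomial_mul (v : Fin N → ℤ) (f : AddMonoidAlgebra ℚ (Fin N →₀ ℤ)) :
    constantTerm (laurentMonomial v * f) = f.coeff (Finsupp.equivFunOnFinite.symm (-v)) := by
  rw [constantTerm, laurentMonomial, AddMonoidAlgebra.coeff_single_mul_apply, one_mul, add_zero]
  congr 1
  ext; simp

theorem constantTerm_laurentMonomial_mul_eq_zero {v : Fin N → ℤ}
    {f : AddMonoidAlgebra ℚ (Fin N →₀ ℤ)} {i : Fin N} (hf : ∀ w ∈ f.coeff.support, w i = 0)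
    (hv : v i ≠ 0) : constantTerm (laurentMonomial v * f) = 0 := by
  rw [constantTerm_laurentMonomial_mul, ← Finsupp.notMem_support_iff]
  exact fun h ↦ hv (by simpa using hf _ h)

theorem one_sub_laurentMonomial_pow (b : ℕ) (v : Fin N → ℤ) :
    (1 - laurentMonomial v) ^ b =
      ∑ k ∈ range (b + 1), ((-1) ^ k * (b.choose k : ℚ)) • laurentMonomial (k • v) := by
  rw [sub_eq_neg_add, add_pow]
  refine sum_congr rfl fun k _ ↦ ?_
  rw [neg_pow, one_pow, mul_one, laurentMonomial_nsmul, Algebra.smul_def, map_mul, map_pow,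
    map_neg, map_one, map_natCast]
  ring

theorem prod_one_sub_laurentMonomial_pow {ι : Type*} [Fintype ι] [DecidableEq ι] (b : ι → ℕ)
    (v : ι → Fin N → ℤ) :
    ∏ l, (1 - laurentMonomial (v l)) ^ b l =
      ∑ j ∈ Fintype.piFinset fun l ↦ range (b l + 1),
        ((-1) ^ (∑ l, j l) * ∏ l, ((b l).choose (j l) : ℚ)) • laurentMonomial (∑ l, j l • v l) := by
  simp only [one_sub_laurentMonomial_pow, prod_univ_sum, prod_smul, laurentMonomial_sum,
    prod_mul_distrib, prod_pow_eq_pow_sum]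

theorem constantTerm_prod_one_sub_laurentMonomial_pow_mul {ι : Type*} [Fintype ι] [DecidableEq ι]
    (b : ι → ℕ) (v : ι → Fin N → ℤ) (f : AddMonoidAlgebra ℚ (Fin N →₀ ℤ)) :
    constantTerm ((∏ l, (1 - laurentMonomial (v l)) ^ b l) * f) =
      ∑ j ∈ Fintype.piFinset fun l ↦ range (b l + 1),
        ((-1) ^ (∑ l, j l) * ∏ l, ((b l).choose (j l) : ℚ)) *
          constantTerm (laurentMonomial (∑ l, j l • v l) * f) := by
  simp only [prod_one_sub_laurentMonomial_pow, sum_mul, constantTerm_sum, smul_mul_assoc,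
    constantTerm_smul]

end LaurentMonomial

section FirstVariable
variable {n : ℕ}

theorem sum_nsmul_single_succ_sub_single_zero (j : Fin n → ℕ) :
    ∑ l, j l • (Pi.single l.succ 1 - Pi.single 0 1 : Fin (n + 1) → ℤ) =
      Fin.cons (-(∑ l, j l : ℕ) : ℤ) fun l ↦ (j l : ℤ) := by
  ext i
  cases i using Fin.cases <;> simp [Pi.single_apply, Finset.sum_apply]

theorem sum_nsmul_single_zero_sub_single_succ (j : Fin n → ℕ) :
    ∑ l, j l • (Pi.single 0 1 - Pi.single l.succ 1 : Fin (n + 1) → ℤ) =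
      Fin.cons ((∑ l, j l : ℕ) : ℤ) fun l ↦ -(j l : ℤ) := by
  ext i
  cases i using Fin.cases <;> simp [Pi.single_apply, Finset.sum_apply]

theorem sum_nsmul_single_succ (j : Fin n → ℕ) :
    ∑ l, j l • (Pi.single l.succ 1 : Fin (n + 1) → ℤ) = Fin.cons 0 fun l ↦ (j l : ℤ) := by
  ext i
  cases i using Fin.cases <;> simp [Pi.single_apply, Finset.sum_apply]

theorem sum_single_succ (w : Fin n → ℤ) :
    ∑ l, (Pi.single l.succ (w l) : Fin (n + 1) → ℤ) = Fin.cons 0 w := by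
  ext i
  cases i using Fin.cases <;> simp [Pi.single_apply, Finset.sum_apply]

noncomputable def expansionCoeff (a : Fin n → ℕ) (L : AddMonoidAlgebra ℚ (Fin (n + 1) →₀ ℤ))
    (j : Fin n → ℕ) : ℚ :=
  constantTerm (laurentMonomial (Fin.cons (-(∑ l, j l : ℕ) : ℤ) fun l ↦ (j l : ℤ)) *
    ((∏ l, (1 - laurentMonomial (Pi.single 0 1 - Pi.single l.succ 1)) ^ a l) * L))

theorem expansionCoeff_eq_sum (a j : Fin n → ℕ) (L : AddMonoidAlgebra ℚ (Fin (n + 1) →₀ ℤ)) :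
    expansionCoeff a L j =
    ∑ i ∈ Fintype.piFinset fun l ↦ range (a l + 1),
      ((-1) ^ (∑ l, i l) * ∏ l, ((a l).choose (i l) : ℚ)) *
        constantTerm (laurentMonomial
          (Fin.cons (((∑ l, i l : ℕ) : ℤ) - (∑ l, j l : ℕ)) fun l ↦ (j l : ℤ) - i l) * L) := by
  rw [expansionCoeff, mul_left_comm, constantTerm_prod_one_sub_laurentMonomial_pow_mul]
  refine sum_congr rfl fun i _ ↦ ?_
  rw [← mul_assoc, ← laurentMonomial_add, sum_nsmul_single_zero_sub_single_succ]
  congr 4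
  ext k
  cases k using Fin.cases <;> simp <;> ring

theorem constantTerm_sum_pow_mul_prod_mul (A : ℕ) (a : Fin n → ℕ)
    (L : AddMonoidAlgebra ℚ (Fin (n + 1) →₀ ℤ)) :
    constantTerm ((∑ l : Fin n, laurentMonomial (Pi.single l.succ 1)) ^ A *
      (∏ l : Fin n, laurentMonomial (Pi.single l.succ (-(a l : ℤ)))) * L) =
    ∑ k ∈ univ.piAntidiag A, (Nat.multinomial univ k : ℚ) *
      constantTerm (laurentMonomial (Fin.cons 0 fun l ↦ (k l : ℤ) - a l) * L) := by
  rw [sum_pow_eq_sum_piAntidiag, sum_mul, sum_mul, constantTerm_sum]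
  refine sum_congr rfl fun k _ ↦ ?_
  rw [← laurentMonomial_sum, sum_single_succ]
  simp only [← laurentMonomial_nsmul, ← laurentMonomial_sum, sum_nsmul_single_succ]
  rw [mul_assoc, mul_assoc, ← mul_assoc (laurentMonomial _), ← laurentMonomial_add,
    ← nsmul_eq_mul, ← Nat.cast_smul_eq_nsmul ℚ, constantTerm_smul]
  congr 4
  ext l
  cases l using Fin.cases <;> simp [sub_eq_add_neg]

variable {L : AddMonoidAlgebra ℚ (Fin (n + 1) →₀ ℤ)} (hL : ∀ v ∈ L.coeff.support, v 0 = 0)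
include hL

theorem constantTerm_laurentMonomial_cons_mul_eq_zero {m : ℤ} (w : Fin n → ℤ) (hm : m ≠ 0) :
    constantTerm (laurentMonomial (Fin.cons m w) * L) = 0 :=
  constantTerm_laurentMonomial_mul_eq_zero hL hm

theorem expansionCoeff_eq_zero_of_lt {a j : Fin n → ℕ} (hj : ∑ l, a l < ∑ l, j l) :
    expansionCoeff a L j = 0 := by
  rw [expansionCoeff_eq_sum]
  refine sum_eq_zero fun i hi ↦ ?_
  have : ∑ l, i l < ∑ l, j l := (Fintype.sum_mono (le_of_mem_piFinset_range hi)).trans_lt hj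
  rw [constantTerm_laurentMonomial_cons_mul_eq_zero hL _ (by omega), mul_zero]

theorem expansionCoeff_of_sum_eq {a j : Fin n → ℕ} (hj : ∑ l, j l = ∑ l, a l) :
    expansionCoeff a L j =
    (-1) ^ (∑ l, a l) *
      constantTerm (laurentMonomial (Fin.cons 0 fun l ↦ (j l : ℤ) - a l) * L) := by
  rw [expansionCoeff_eq_sum,
    sum_eq_single_of_mem a (Fintype.mem_piFinset.2 fun l ↦ self_mem_range_succ (a l))]
  · simp [hj]
  · intro i hi hia
    have : ∑ l, i l < ∑ l, a l :=
      Fintype.sum_strictMono (lt_of_le_of_ne (le_of_mem_piFinset_range hi) hia)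
    rw [constantTerm_laurentMonomial_cons_mul_eq_zero hL _ (by omega), mul_zero]

end FirstVariable

/-- Gessel–Lv–Xin–Zhou: as a function of `a₀`, the constant term of
`∏_{l=1}^n (1 - x_l/x_0)^{a₀} (1 - x_0/x_l)^{a_l} · L(x_1,…,x_n)` is a polynomial in `a₀`
of degree at most `a_1 + ⋯ + a_n`, whose coefficient in degree `a_1 + ⋯ + a_n` is
`1/(a_1+⋯+a_n)!` times the constant term of
`(x_1 + ⋯ + x_n)^{a_1+⋯+a_n} ∏_l x_l^{-a_l} · L`. Here `x_0` is the variable indexed by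
`0 : Fin (n+1)`, `x_l` is indexed by `l.succ` for `l : Fin n`, and the Laurent polynomial
`L` is independent of `x_0` (its support exponents vanish at `0`). -/
theorem gessel_lv_xin_zhou (n : ℕ) (a : Fin n → ℕ)
    (L : AddMonoidAlgebra ℚ (Fin (n + 1) →₀ ℤ))
    (hL : ∀ v ∈ (AddMonoidAlgebra.coeff L : (Fin (n + 1) →₀ ℤ) →₀ ℚ).support, v 0 = 0) :
    ∃ q : Polynomial ℚ,
      q.degree ≤ (∑ l, a l : ℕ) ∧
      (∀ a₀ : ℕ,
        q.eval (a₀ : ℚ) =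
          constantTerm
            ((∏ l : Fin n,
                (1 - laurentMonomial
                    (Pi.single (l.succ : Fin (n + 1)) 1 - Pi.single 0 1)) ^ a₀ *
                  (1 - laurentMonomial
                      (Pi.single (0 : Fin (n + 1)) 1 -
                        Pi.single (l.succ : Fin (n + 1)) 1)) ^ (a l)) * L)) ∧
      q.coeff (∑ l, a l) =
        (1 / ((∑ l, a l).factorial : ℚ)) *
          constantTerm
            ((∑ l : Fin n, laurentMonomial (Pi.single (l.succ : Fin (n + 1)) 1)) ^ (∑ l, a l) *
              (∏ l : Fin n,
                laurentMonomial (Pi.single (l.succ : Fin (n + 1)) (-(a l : ℤ)))) * L) := by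
  obtain ⟨q, hdeg, heval, hcoeff⟩ := exists_polynomial_eval_eq_sum_prod_choose (∑ l, a l)
    (fun j ↦ (-1) ^ (∑ l, j l) * expansionCoeff a L j)
    fun j hj ↦ by rw [expansionCoeff_eq_zero_of_lt hL hj, mul_zero]
  refine ⟨q, hdeg, fun a₀ ↦ ?_, ?_⟩
  · rw [heval, prod_mul_distrib, mul_assoc,
      constantTerm_prod_one_sub_laurentMonomial_pow_mul (fun _ ↦ a₀)]
    refine sum_congr rfl fun j _ ↦ ?_
    rw [sum_nsmul_single_succ_sub_single_zero, expansionCoeff]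
    ring
  · rw [hcoeff, constantTerm_sum_pow_mul_prod_mul, mul_sum]
    refine sum_congr rfl fun j hj ↦ ?_
    have hjA : ∑ l, j l = ∑ l, a l := (mem_piAntidiag.1 hj).1
    rw [expansionCoeff_of_sum_eq hL hjA, hjA, ← mul_assoc,
      ← pow_add, Even.neg_one_pow ⟨_, rfl⟩, one_mul, div_eq_mul_inv,
      inv_prod_factorial_eq_multinomial_div, hjA]
    ring
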